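/- Let R be a real d×N matrix and λ > 0. Define c^λ = (RᵀR + λ||R||²₂ I)^{-1} 1_N / (1_Nᵀ (RᵀR + λ||R||²₂ I)^{-1} 1_N). Then ||c^λ||_2 ≤ (1/√N) · sqrt(1 + 1/λ). -/

import Mathlib

/-!
With `μ = λ‖R‖₂²` and `M = RᵀR + μI`, the vector `c` minimises the quadratic form `xᵀMx` on the
hyperplane `1ᵀx = 1`. Comparing with the uniform vector `x = 1/N` gives
`μ‖c‖² ≤ cᵀMc ≤ xᵀMx ≤ (‖R‖₂² + μ)/N`, which is the claim after dividing by `μ`.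
If `R = 0` then `M = 0`, so `M⁻¹ = 0` in Lean and `c = 0`.
-/

open Matrix
open scoped Matrix.Norms.L2Operator

/-- Euclidean (ℓ₂) norm of a real vector. -/
noncomputable def vnorm {ι : Type*} [Fintype ι] (v : ι → ℝ) : ℝ :=
  ‖(show EuclideanSpace ℝ ι from WithLp.toLp 2 v)‖

lemma vnorm_sq {ι : Type*} [Fintype ι] (v : ι → ℝ) : vnorm v ^ 2 = v ⬝ᵥ v := by
  rw [vnorm, EuclideanSpace.norm_eq, Real.sq_sqrt (by positivity)]
  simp [dotProduct, sq]

namespace Matrix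

variable {m n : Type*} [Fintype m] [Fintype n]

theorem PosSemidef.dotProduct_mulVec_le_of_mulVec_eq_smul {M : Matrix n n ℝ}
    (hM : M.PosSemidef) {c w x : n → ℝ} {t : ℝ} (hc : M *ᵥ c = t • w)
    (hx : w ⬝ᵥ x = w ⬝ᵥ c) : c ⬝ᵥ M *ᵥ c ≤ x ⬝ᵥ M *ᵥ x := by
  obtain ⟨e, rfl⟩ : ∃ e, x = c + e := ⟨x - c, by abel⟩
  have he : w ⬝ᵥ e = 0 := by simpa [dotProduct_add] using hx
  have hMT : Mᵀ = M := by simpa using hM.isHermitian.eq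
  have hce : c ⬝ᵥ M *ᵥ e = 0 := by
    rw [dotProduct_mulVec, ← mulVec_transpose, hMT, hc, smul_dotProduct, he, smul_zero]
  have hec : e ⬝ᵥ M *ᵥ c = 0 := by
    rw [hc, dotProduct_smul, dotProduct_comm, he, smul_zero]
  have hee : 0 ≤ e ⬝ᵥ M *ᵥ e := by simpa using hM.dotProduct_mulVec_nonneg e
  simp only [mulVec_add, dotProduct_add, add_dotProduct, hce, hec]
  linarith

theorem PosDef.dotProduct_mulVec_le_of_dotProduct_eq_one [DecidableEq n] {M : Matrix n n ℝ}
    (hM : M.PosDef) {w x c : n → ℝ} (hw : w ≠ 0) (hx : w ⬝ᵥ x = 1)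
    (hc : c = (w ⬝ᵥ M⁻¹ *ᵥ w)⁻¹ • M⁻¹ *ᵥ w) : c ⬝ᵥ M *ᵥ c ≤ x ⬝ᵥ M *ᵥ x := by
  have hs : 0 < w ⬝ᵥ M⁻¹ *ᵥ w := by simpa using hM.inv.dotProduct_mulVec_pos hw
  have hMc : M *ᵥ c = (w ⬝ᵥ M⁻¹ *ᵥ w)⁻¹ • w := by
    rw [hc, mulVec_smul, mulVec_mulVec,
      mul_nonsing_inv _ ((isUnit_iff_isUnit_det M).mp hM.isUnit), one_mulVec]
  have hwc : w ⬝ᵥ c = 1 := by rw [hc, dotProduct_smul, smul_eq_mul, inv_mul_cancel₀ hs.ne']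
  exact hM.posSemidef.dotProduct_mulVec_le_of_mulVec_eq_smul hMc (hx.trans hwc.symm)

theorem posDef_transpose_mul_add_smul_one [DecidableEq n] (R : Matrix m n ℝ) {μ : ℝ}
    (hμ : 0 < μ) : (Rᵀ * R + μ • 1).PosDef := by
  have hRR : (Rᵀ * R).PosSemidef := by simpa using posSemidef_conjTranspose_mul_self R
  exact PosDef.posSemidef_add hRR (PosDef.one.smul hμ)

theorem dotProduct_transpose_mul_add_smul_one_mulVec [DecidableEq n] (R : Matrix m n ℝ) (μ : ℝ)
    (x : n → ℝ) :
    x ⬝ᵥ (Rᵀ * R + μ • 1) *ᵥ x = (R *ᵥ x) ⬝ᵥ (R *ᵥ x) + μ * (x ⬝ᵥ x) := by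
  rw [add_mulVec, smul_mulVec, one_mulVec, ← mulVec_mulVec, dotProduct_add, dotProduct_smul,
    smul_eq_mul, dotProduct_mulVec, vecMul_transpose]

theorem mulVec_dotProduct_mulVec_self_le [DecidableEq n] (R : Matrix m n ℝ) (x : n → ℝ) :
    (R *ᵥ x) ⬝ᵥ (R *ᵥ x) ≤ ‖R‖ ^ 2 * (x ⬝ᵥ x) := by
  have h : vnorm (R *ᵥ x) ≤ ‖R‖ * vnorm x := R.l2_opNorm_mulVec (WithLp.toLp 2 x)
  rw [← vnorm_sq, ← vnorm_sq, ← mul_pow]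
  exact pow_le_pow_left₀ (norm_nonneg _) h 2

theorem mul_dotProduct_self_le_dotProduct_transpose_mul_add_smul_one_mulVec [DecidableEq n]
    (R : Matrix m n ℝ) (μ : ℝ) (x : n → ℝ) :
    μ * (x ⬝ᵥ x) ≤ x ⬝ᵥ (Rᵀ * R + μ • 1) *ᵥ x := by
  rw [dotProduct_transpose_mul_add_smul_one_mulVec]
  exact le_add_of_nonneg_left (dotProduct_self_star_nonneg _)

theorem dotProduct_transpose_mul_add_smul_one_mulVec_le [DecidableEq n] (R : Matrix m n ℝ)
    (μ : ℝ) (x : n → ℝ) :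
    x ⬝ᵥ (Rᵀ * R + μ • 1) *ᵥ x ≤ (‖R‖ ^ 2 + μ) * (x ⬝ᵥ x) := by
  rw [dotProduct_transpose_mul_add_smul_one_mulVec, add_mul]
  gcongr
  exact mulVec_dotProduct_mulVec_self_le R x

end Matrix

/-- For a real `d×N` matrix `R` and `λ > 0`, the regularized
RNA coefficients `c^λ = (RᵀR + λ‖R‖₂² I)⁻¹ 1 / (1ᵀ (RᵀR + λ‖R‖₂² I)⁻¹ 1)`
satisfy `‖c^λ‖₂ ≤ (1/√N) √(1 + 1/λ)`. -/
theorem rna_coefficients_norm_bound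
    (d N : ℕ) (hN : 0 < N) (R : Matrix (Fin d) (Fin N) ℝ)
    (lam : ℝ) (hlam : 0 < lam)
    (M : Matrix (Fin N) (Fin N) ℝ)
    (hM : M = Rᵀ * R + (lam * ‖R‖ ^ 2) • (1 : Matrix (Fin N) (Fin N) ℝ))
    (c : Fin N → ℝ)
    (hc : c = (((fun _ => 1 : Fin N → ℝ) ⬝ᵥ M⁻¹.mulVec (fun _ => 1))⁻¹) •
      M⁻¹.mulVec (fun _ => 1)) :
    vnorm c ≤ (1 / Real.sqrt N) * Real.sqrt (1 + 1 / lam) := by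
  by_cases hR : R = 0
  · rw [show c = 0 by simp [hc, hM, hR]]
    simp [vnorm]
    positivity
  set μ := lam * ‖R‖ ^ 2
  have hμ : 0 < μ := by have := norm_pos_iff.mpr hR; positivity
  set x : Fin N → ℝ := fun _ => (N : ℝ)⁻¹
  have hx : (fun _ => 1 : Fin N → ℝ) ⬝ᵥ x = 1 := by simp [x, dotProduct, hN.ne']
  have hxx : x ⬝ᵥ x = (N : ℝ)⁻¹ := by simp [x, dotProduct]; field_simp
  have hw : (fun _ => 1 : Fin N → ℝ) ≠ 0 := fun h => one_ne_zero (congrFun h ⟨0, hN⟩)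
  have hmin : c ⬝ᵥ M *ᵥ c ≤ x ⬝ᵥ M *ᵥ x :=
    (hM ▸ posDef_transpose_mul_add_smul_one R hμ).dotProduct_mulVec_le_of_dotProduct_eq_one hw hx hc
  have hbound : μ * (c ⬝ᵥ c) ≤ (‖R‖ ^ 2 + μ) * (x ⬝ᵥ x) := by
    rw [hM] at hmin
    exact (mul_dotProduct_self_le_dotProduct_transpose_mul_add_smul_one_mulVec R μ c).trans
      (hmin.trans (dotProduct_transpose_mul_add_smul_one_mulVec_le R μ x))
  have hsq : vnorm c ^ 2 ≤ ((1 / Real.sqrt N) * Real.sqrt (1 + 1 / lam)) ^ 2 := by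
    rw [vnorm_sq, mul_pow, div_pow, one_pow, Real.sq_sqrt (by positivity),
      Real.sq_sqrt (by positivity)]
    refine le_of_mul_le_mul_left (hbound.trans_eq ?_) hμ
    rw [hxx]
    field_simp
    ring
  exact (pow_le_pow_iff_left₀ (norm_nonneg _) (by positivity) two_ne_zero).mp hsq
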